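/- arXiv:2302.13171 — 2 statements merged into one kernel-verified Lean document; each statement's English description precedes it below -/
import Mathlib

section
/- The poset R₀ (triples ⟨t, f⃗, g⟩ with ⟨t, f⃗⟩ ∈ Q_{κ,δ} and g a pair ⟨f_{ht(t)-1}, ξ⟩, ξ < δ) is dense in the two-step iteration Q_{κ,δ} * Ḟ_{κ,δ}. -/
universe u

/-- A node of the binary tree `2^{<κ}`: a binary sequence of some ordinal length. -/
def BNode : Type (u + 1) :=
  Σ β : Ordinal.{u}, ({x : Ordinal.{u} // x < β} → Bool)

/-- The height (level) of a node is its length. -/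
def BNode.ht (s : BNode.{u}) : Ordinal.{u} := s.1

/-- The restriction of a node to a smaller length. -/
def BNode.restrict (t : BNode.{u}) (β : Ordinal.{u}) (h : β ≤ t.1) : BNode.{u} :=
  ⟨β, fun x => t.2 ⟨x.1, lt_of_lt_of_le x.2 h⟩⟩

/-- Tree order on nodes: end extension. -/
def BNode.le (s t : BNode.{u}) : Prop :=
  s.1 ≤ t.1 ∧ ∀ x : {x : Ordinal.{u} // x < s.1}, ∀ hx : x.1 < t.1, s.2 x = t.2 ⟨x.1, hx⟩

/-- Strict tree order on nodes. -/
def BNode.slt (s t : BNode.{u}) : Prop := BNode.le s t ∧ s.1 < t.1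

/-- Replace the initial segment of `t` of length `s₁.1` by `s₁` ("swapping stems"). -/
noncomputable def BNode.swap (s₁ t : BNode.{u}) (h : s₁.1 ≤ t.1) : BNode.{u} :=
  ⟨t.1, fun x => if hx : x.1 < s₁.1 then s₁.2 ⟨x.1, hx⟩ else t.2 x⟩

/-- `C` is club in `κ`: unbounded in `κ` and closed under suprema below `κ`. -/
def IsClubIn (C : Set Ordinal.{u}) (κ : Ordinal.{u}) : Prop :=
  (∀ α < κ, ∃ β ∈ C, α < β ∧ β < κ) ∧
    ∀ α < κ, (0 : Ordinal.{u}) < α →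
      (∀ β < α, ∃ γ ∈ C, β < γ ∧ γ < α) → α ∈ C

/-- `S` is stationary in `κ`: it meets every club subset of `κ`. -/
def IsStationaryIn (S : Set Ordinal.{u}) (κ : Ordinal.{u}) : Prop :=
  ∀ C : Set Ordinal.{u}, IsClubIn C κ → ∃ x, x ∈ S ∧ x ∈ C ∧ x < κ

/-- `κ` is Mahlo: inaccessible, and the regular cardinals below `κ` are stationary. -/
def IsMahlo (κ : Cardinal.{u}) : Prop :=
  κ.IsInaccessible ∧
    IsStationaryIn {o : Ordinal.{u} | o.card.IsRegular ∧ o.card.ord = o} κ.ord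

/-- `κ` is 2-Mahlo: Mahlo, and the Mahlo cardinals below `κ` are stationary. -/
def Is2Mahlo (κ : Cardinal.{u}) : Prop :=
  IsMahlo κ ∧ IsStationaryIn {o : Ordinal.{u} | IsMahlo o.card ∧ o.card.ord = o} κ.ord

/-- A condition of Gitik's forcing `Q_{κ,δ}`: a normal homogeneous subtree of `2^{<κ}`
of successor height `top + 1 < κ`, together with a `δ`-ascent path `f` through it. -/
structure QCond (κ δ : Ordinal.{u}) : Type (u + 1) where
  /-- the top level of the tree; the tree has successor height `top + 1`. -/
  top : Ordinal.{u}
  top_lt : top + 1 < κ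
  /-- the tree. -/
  T : Set BNode.{u}
  mem_ht : ∀ t ∈ T, BNode.ht t < top + 1
  levels_nonempty : ∀ α < top + 1, ∃ t ∈ T, BNode.ht t = α
  downward_closed : ∀ t ∈ T, ∀ β : Ordinal.{u}, ∀ h : β ≤ BNode.ht t,
    BNode.restrict t β h ∈ T
  /-- normality: every node extends to every higher level below the height. -/
  normal : ∀ t ∈ T, ∀ α : Ordinal.{u}, BNode.ht t ≤ α → α < top + 1 →
    ∃ s ∈ T, BNode.ht s = α ∧ BNode.le t s
  /-- homogeneity: the cone above a node is invariant under swapping stems on a level. -/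
  homog : ∀ s₀ ∈ T, ∀ s₁ ∈ T, BNode.ht s₀ = BNode.ht s₁ →
    ∀ t ∈ T, BNode.le s₀ t → ∀ h : BNode.ht s₁ ≤ BNode.ht t, BNode.swap s₁ t h ∈ T
  /-- the `δ`-ascent path. -/
  f : Ordinal.{u} → Ordinal.{u} → BNode.{u}
  f_mem : ∀ α < top + 1, ∀ υ < δ, f α υ ∈ T ∧ BNode.ht (f α υ) = α
  f_ascent : ∀ α β : Ordinal.{u}, α < β → β < top + 1 →
    ∃ ξ < δ, ∀ υ : Ordinal.{u}, ξ ≤ υ → υ < δ → BNode.slt (f α υ) (f β υ)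

/-- The order on `Q_{κ,δ}`: end extension of the tree and of the ascent path. -/
def QLe {κ δ : Ordinal.{u}} (p q : QCond.{u} κ δ) : Prop :=
  q.top ≤ p.top ∧ q.T = {t ∈ p.T | BNode.ht t < q.top + 1} ∧
    ∀ α ≤ q.top, ∀ υ < δ, p.f α υ = q.f α υ

/-- A condition of the dense set `R₀` in `Q_{κ,δ} * Ḟ_{κ,δ}`: a condition `⟨t, f⃗⟩` of
`Q_{κ,δ}` together with `g = ⟨f_{ht(t)-1}, ξ⟩` for some `ξ < δ`, the `F`-part acting at
the top level of the tree. -/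
structure RCond (κ δ : Ordinal.{u}) extends QCond.{u} κ δ : Type (u + 1) where
  /-- the starting point of the `F_{κ,δ}`-condition. -/
  ξ : Ordinal.{u}
  ξ_lt : ξ < δ

/-- The order on `R₀`: extension in `Q_{κ,δ}`, equality of the `ξ`'s, and coordinatewise
tree-extension of the top functions above `ξ`. -/
def RLe {κ δ : Ordinal.{u}} (p q : RCond.{u} κ δ) : Prop :=
  QLe p.toQCond q.toQCond ∧ p.ξ = q.ξ ∧
    ∀ υ : Ordinal.{u}, p.ξ ≤ υ → υ < δ → BNode.le (q.f q.top υ) (p.f p.top υ)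

/-- A condition of the two-step iteration `Q_{κ,δ} * Ḟ_{κ,δ}`: a condition `q ∈ Q_{κ,δ}`
together with a `Q_{κ,δ}`-name `N` for a condition of `F_{κ,δ}`.  Since a condition of
`F_{κ,δ}` is a pair `⟨f_α, ξ⟩` determined by two ordinals, the name is given by the sets
`N α ξ` of conditions (below `q`) forcing its value to be `⟨f_α, ξ⟩`. -/
structure ItCond (κ δ : Ordinal.{u}) : Type (u + 1) where
  /-- the `Q_{κ,δ}`-part. -/
  q : QCond.{u} κ δ
  /-- the name for the `F_{κ,δ}`-part. -/
  N : Ordinal.{u} → Ordinal.{u} → Set (QCond.{u} κ δ)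
  coherent : ∀ α ξ : Ordinal.{u}, ∀ r ∈ N α ξ, QLe r q ∧ α ≤ r.top ∧ ξ < δ
  down_closed : ∀ α ξ : Ordinal.{u}, ∀ r ∈ N α ξ, ∀ r' : QCond.{u} κ δ,
    QLe r' r → r' ∈ N α ξ
  value_unique : ∀ α₁ ξ₁ α₂ ξ₂ : Ordinal.{u}, ∀ r : QCond.{u} κ δ,
    r ∈ N α₁ ξ₁ → r ∈ N α₂ ξ₂ → α₁ = α₂ ∧ ξ₁ = ξ₂
  densely_decided : ∀ r : QCond.{u} κ δ, QLe r q →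
    ∃ r' : QCond.{u} κ δ, QLe r' r ∧ ∃ α ξ : Ordinal.{u}, r' ∈ N α ξ

/-- The iteration order on `Q_{κ,δ} * Ḟ_{κ,δ}`: the `Q`-parts extend and the `Q`-part of
the extension forces the named `F`-conditions to extend (same `ξ` and coordinatewise
tree-extension above `ξ`, as computed from any condition deciding both names). -/
def ItLe {κ δ : Ordinal.{u}} (p q : ItCond.{u} κ δ) : Prop :=
  QLe p.q q.q ∧
    ∀ r : QCond.{u} κ δ, QLe r p.q → ∀ α₁ ξ₁ α₂ ξ₂ : Ordinal.{u},
      r ∈ p.N α₁ ξ₁ → r ∈ q.N α₂ ξ₂ →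
        ξ₁ = ξ₂ ∧ ∀ υ : Ordinal.{u}, ξ₁ ≤ υ → υ < δ → BNode.le (r.f α₂ υ) (r.f α₁ υ)

/-!
Below `c.q` some `r` decides the `F`-part of `c` to be `⟨f_α, ξ⟩` with `α ≤ top r`. Grow the
tree of `r` by one level (all one-bit extensions of its top level, which keeps it normal and
homogeneous) and put the ascent path on the new level above `f_α υ` for every `υ < δ`, and
above `f_{top r} υ` whenever that already extends `f_α υ`; the ascent property of `r` makes the
latter hold for all large `υ`, so the new path is again a `δ`-ascent path. The extended
condition with `ξ` lies in `R₀` and is below `c`, since its new top function extends `f_α`.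
-/

namespace BNode

theorem le_refl (s : BNode.{u}) : s.le s := ⟨le_rfl, fun _ _ => rfl⟩

theorem le_trans {s t w : BNode.{u}} (hst : s.le t) (htw : t.le w) : s.le w :=
  ⟨hst.1.trans htw.1, fun x hx =>
    (hst.2 x (x.2.trans_le hst.1)).trans (htw.2 ⟨x.1, x.2.trans_le hst.1⟩ hx)⟩

theorem le_restrict {s t : BNode.{u}} (h : s.le t) {β : Ordinal.{u}} (hsβ : s.1 ≤ β)
    (hβt : β ≤ t.1) : s.le (t.restrict β hβt) :=
  ⟨hsβ, fun x hx => h.2 x (hx.trans_le hβt)⟩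

theorem restrict_eq_of_le {s t : BNode.{u}} (h : s.le t) {β : Ordinal.{u}} (hsβ : s.1 = β)
    (hβt : β ≤ t.1) : t.restrict β hβt = s := by
  obtain ⟨β, s⟩ := s
  subst hsβ
  exact congrArg (Sigma.mk β) (funext fun x => (h.2 x _).symm)

theorem restrict_eq_restrict_of_le {s t : BNode.{u}} (h : s.le t) {β : Ordinal.{u}}
    (hβs : β ≤ s.1) (hβt : β ≤ t.1) : t.restrict β hβt = s.restrict β hβs :=
  congrArg (Sigma.mk β)
    (funext fun x => (h.2 ⟨x.1, x.2.trans_le hβs⟩ (x.2.trans_le hβt)).symm)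

noncomputable def bext (t : BNode.{u}) (b : Bool) : BNode.{u} :=
  ⟨t.1 + 1, fun x => if hx : x.1 < t.1 then t.2 ⟨x.1, hx⟩ else b⟩

theorem le_bext (t : BNode.{u}) (b : Bool) : t.le (t.bext b) :=
  ⟨(lt_add_one t.1).le, fun x _ => by
    change _ = dite _ _ _
    rw [dif_pos x.2]⟩

theorem le_swap_of_le {w s t : BNode.{u}} (hst : s.1 ≤ t.1) (hws : w.le s) (hwt : w.1 ≤ t.1) :
    w.le (swap s t hst) :=
  ⟨hwt, fun x _ => by
    change _ = dite _ _ _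
    rw [dif_pos (x.2.trans_le hws.1)]
    exact hws.2 x _⟩

theorem swap_restrict_le {s t : BNode.{u}} (hst : s.1 ≤ t.1) {β : Ordinal.{u}}
    (hsβ : s.1 ≤ β) (hβt : β ≤ t.1) :
    (swap s (t.restrict β hβt) hsβ).le (swap s t hst) := by
  refine ⟨hβt, fun x hx => ?_⟩
  change dite _ _ _ = dite _ _ _
  split_ifs <;> rfl

def nextLevel (T : Set BNode.{u}) (γ : Ordinal.{u}) : Set BNode.{u} :=
  {u | u.1 = γ + 1 ∧ ∃ s ∈ T, s.1 = γ ∧ s.le u}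

theorem bext_mem_nextLevel {T : Set BNode.{u}} {γ : Ordinal.{u}} {s : BNode.{u}} (hs : s ∈ T)
    (hsγ : s.1 = γ) (b : Bool) : s.bext b ∈ nextLevel T γ :=
  ⟨congrArg (· + 1) hsγ, s, hs, hsγ, le_bext s b⟩

end BNode

theorem QLe.refl {κ δ : Ordinal.{u}} (p : QCond.{u} κ δ) : QLe p p :=
  ⟨le_rfl, Set.ext fun t => ⟨fun h => ⟨h, p.mem_ht t h⟩, fun h => h.1⟩, fun _ _ _ _ => rfl⟩

theorem QLe.trans {κ δ : Ordinal.{u}} {p q r : QCond.{u} κ δ} (hpq : QLe p q)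
    (hqr : QLe q r) : QLe p r := by
  refine ⟨hqr.1.trans hpq.1, ?_, fun a ha υ hυ =>
    (hpq.2.2 a (ha.trans hqr.1) υ hυ).trans (hqr.2.2 a ha υ hυ)⟩
  rw [hqr.2.1, hpq.2.1]
  ext t
  exact ⟨fun h => ⟨h.1.1, h.2⟩,
    fun h => ⟨⟨h.1, h.2.trans_le (add_le_add_left hqr.1 1)⟩, h.2⟩⟩

namespace QCond

open BNode

variable {κ δ : Ordinal.{u}} (q : QCond.{u} κ δ)

def succTree : Set BNode.{u} := q.T ∪ nextLevel q.T q.top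

variable {q}

theorem mem_T_of_mem_succTree {t : BNode.{u}} (ht : t ∈ q.succTree) (htop : t.1 ≤ q.top) :
    t ∈ q.T := by
  rcases ht with ht | ht
  · exact ht
  · exact absurd (ht.1 ▸ htop) (lt_add_one q.top).not_ge

theorem succTree_mem_ht {t : BNode.{u}} (ht : t ∈ q.succTree) : t.ht < q.top + 1 + 1 := by
  rcases ht with ht | ht
  · exact (q.mem_ht t ht).trans (lt_add_one _)
  · exact ht.1 ▸ lt_add_one _

theorem succTree_levels_nonempty {α : Ordinal.{u}} (hα : α < q.top + 1 + 1) :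
    ∃ t ∈ q.succTree, t.ht = α := by
  rcases (Order.lt_add_one_iff.1 hα).lt_or_eq with hα | rfl
  · obtain ⟨t, ht, rfl⟩ := q.levels_nonempty α hα
    exact ⟨t, Or.inl ht, rfl⟩
  · obtain ⟨t, ht, htop⟩ := q.levels_nonempty q.top (lt_add_one _)
    exact ⟨t.bext false, Or.inr (bext_mem_nextLevel ht htop false), congrArg (· + 1) htop⟩

theorem succTree_downward_closed {t : BNode.{u}} (ht : t ∈ q.succTree) {β : Ordinal.{u}}
    (hβ : β ≤ t.ht) : t.restrict β hβ ∈ q.succTree := by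
  rcases ht with ht | ⟨hth, s, hs, hsh, hst⟩
  · exact Or.inl (q.downward_closed t ht β hβ)
  · rcases le_or_gt β q.top with hβtop | hβtop
    · rw [restrict_eq_restrict_of_le hst (hβtop.trans_eq hsh.symm) hβ]
      exact Or.inl (q.downward_closed s hs β _)
    · have hβt : t.1 = β :=
        hth.trans ((hβ.trans_eq hth).antisymm (Order.add_one_le_of_lt hβtop)).symm
      rw [restrict_eq_of_le (le_refl t) hβt hβ]
      exact Or.inr ⟨hth, s, hs, hsh, hst⟩

theorem succTree_normal {t : BNode.{u}} (ht : t ∈ q.succTree) {α : Ordinal.{u}}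
    (htα : t.ht ≤ α) (hα : α < q.top + 1 + 1) :
    ∃ s ∈ q.succTree, s.ht = α ∧ t.le s := by
  rcases (Order.lt_add_one_iff.1 hα).lt_or_eq with hα | rfl
  · obtain ⟨s, hs, hsα, hts⟩ :=
      q.normal t (mem_T_of_mem_succTree ht (Order.lt_add_one_iff.1 (htα.trans_lt hα))) α htα hα
    exact ⟨s, Or.inl hs, hsα, hts⟩
  rcases ht with ht | ht
  · obtain ⟨s, hs, hsh, hts⟩ :=
      q.normal t ht q.top (Order.lt_add_one_iff.1 (q.mem_ht t ht)) (lt_add_one _)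
    exact ⟨s.bext false, Or.inr (bext_mem_nextLevel hs hsh false), congrArg (· + 1) hsh,
      le_trans hts (le_bext s false)⟩
  · exact ⟨t, Or.inr ht, ht.1, le_refl t⟩

theorem swap_mem_nextLevel {s₀ s₁ t : BNode.{u}} (hs₀ : s₀ ∈ q.T) (hs₁ : s₁ ∈ q.T)
    (hs : s₀.ht = s₁.ht) (ht : t ∈ nextLevel q.T q.top) (hs₀t : s₀.le t) (hs₁t : s₁.ht ≤ t.ht) :
    swap s₁ t hs₁t ∈ nextLevel q.T q.top := by
  obtain ⟨hth, w, hw, hwh, hwt⟩ := ht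
  have htop : q.top ≤ t.1 := hth ▸ (lt_add_one _).le
  have hs₁top : s₁.1 ≤ q.top := Order.lt_add_one_iff.1 (q.mem_ht s₁ hs₁)
  have hs₀top : s₀.1 ≤ q.top := Order.lt_add_one_iff.1 (q.mem_ht s₀ hs₀)
  have hrestrict : t.restrict q.top htop ∈ q.T := by
    rwa [restrict_eq_of_le hwt hwh]
  exact ⟨hth, _, q.homog s₀ hs₀ s₁ hs₁ hs _ hrestrict (le_restrict hs₀t hs₀top htop) hs₁top,
    rfl, swap_restrict_le hs₁t hs₁top htop⟩

theorem succTree_homog {s₀ s₁ t : BNode.{u}} (hs₀ : s₀ ∈ q.succTree) (hs₁ : s₁ ∈ q.succTree)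
    (hs : s₀.ht = s₁.ht) (ht : t ∈ q.succTree) (hs₀t : s₀.le t) (hs₁t : s₁.ht ≤ t.ht) :
    swap s₁ t hs₁t ∈ q.succTree := by
  rcases le_or_gt s₁.1 q.top with hs₁top | hs₁top
  · have hs₁T := mem_T_of_mem_succTree hs₁ hs₁top
    have hs₀T := mem_T_of_mem_succTree hs₀ (hs.trans_le hs₁top)
    rcases ht with ht | ht
    · exact Or.inl (q.homog s₀ hs₀T s₁ hs₁T hs t ht hs₀t hs₁t)
    · exact Or.inr (swap_mem_nextLevel hs₀T hs₁T hs ht hs₀t hs₁t)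
  · -- `s₁` and `t` both lie on the new level, so the swap is above the stem of `s₁`
    rcases hs₁ with hs₁ | ⟨hs₁h, w, hw, hwh, hws₁⟩
    · exact absurd (q.mem_ht s₁ hs₁) (Order.add_one_le_of_lt hs₁top).not_gt
    have hth : t.1 = q.top + 1 := (succTree_mem_ht ht |> Order.lt_add_one_iff.1).antisymm
      (hs₁h ▸ hs₁t)
    exact Or.inr ⟨hth, w, hw, hwh, le_swap_of_le hs₁t hws₁ (hwh ▸ hth ▸ (lt_add_one _).le)⟩

theorem exists_f_le_f (q : QCond.{u} κ δ) {α β : Ordinal.{u}} (hαβ : α ≤ β) (hβ : β ≤ q.top)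
    (hδ : 0 < δ) : ∃ ξ < δ, ∀ υ, ξ ≤ υ → υ < δ → (q.f α υ).le (q.f β υ) := by
  rcases hαβ.lt_or_eq with hαβ | rfl
  · obtain ⟨ξ, hξ, hascent⟩ := q.f_ascent α β hαβ (Order.lt_add_one_iff.2 hβ)
    exact ⟨ξ, hξ, fun υ hξυ hυ => (hascent υ hξυ hυ).1⟩
  · exact ⟨0, hδ, fun υ _ _ => le_refl _⟩

noncomputable def succ (q : QCond.{u} κ δ) (g : Ordinal.{u} → BNode.{u})
    (hκ : q.top + 1 + 1 < κ) (hg : ∀ υ < δ, g υ ∈ nextLevel q.T q.top)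
    (hgf : ∃ ξ < δ, ∀ υ, ξ ≤ υ → υ < δ → (q.f q.top υ).le (g υ)) : QCond.{u} κ δ where
  top := q.top + 1
  top_lt := hκ
  T := q.succTree
  mem_ht _ := succTree_mem_ht
  levels_nonempty _ := succTree_levels_nonempty
  downward_closed _ ht _ := succTree_downward_closed ht
  normal _ ht _ := succTree_normal ht
  homog _ hs₀ _ hs₁ hs _ ht := succTree_homog hs₀ hs₁ hs ht
  f α υ := if α ≤ q.top then q.f α υ else g υ
  f_mem α hα υ hυ := by
    by_cases hαtop : α ≤ q.top
    · simp only [if_pos hαtop]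
      exact ⟨Or.inl (q.f_mem α (Order.lt_add_one_iff.2 hαtop) υ hυ).1,
        (q.f_mem α (Order.lt_add_one_iff.2 hαtop) υ hυ).2⟩
    · simp only [if_neg hαtop]
      exact ⟨Or.inr (hg υ hυ), (hg υ hυ).1.trans
        ((Order.add_one_le_of_lt (not_le.1 hαtop)).antisymm (Order.lt_add_one_iff.1 hα))⟩
  f_ascent α β hαβ hβ := by
    by_cases hβtop : β ≤ q.top
    · simp only [if_pos hβtop, if_pos (hαβ.le.trans hβtop)]
      exact q.f_ascent α β hαβ (Order.lt_add_one_iff.2 hβtop)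
    have hαtop : α ≤ q.top := Order.lt_add_one_iff.1 (hαβ.trans_le (Order.lt_add_one_iff.1 hβ))
    obtain ⟨ξ₁, hξ₁, hgf⟩ := hgf
    obtain ⟨ξ₂, hξ₂, hf⟩ := q.exists_f_le_f hαtop le_rfl (zero_le.trans_lt hξ₁)
    refine ⟨max ξ₁ ξ₂, max_lt hξ₁ hξ₂, fun υ hξυ hυ => ?_⟩
    simp only [if_neg hβtop, if_pos hαtop]
    refine ⟨le_trans (hf υ (le_of_max_le_right hξυ) hυ) (hgf υ (le_of_max_le_left hξυ) hυ), ?_⟩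
    change BNode.ht (q.f α υ) < (g υ).1
    rw [(q.f_mem α (Order.lt_add_one_iff.2 hαtop) υ hυ).2, (hg υ hυ).1]
    exact Order.lt_add_one_iff.2 hαtop

section succ

variable {g : Ordinal.{u} → BNode.{u}} {hκ : q.top + 1 + 1 < κ}
  {hg : ∀ υ < δ, g υ ∈ nextLevel q.T q.top}
  {hgf : ∃ ξ < δ, ∀ υ, ξ ≤ υ → υ < δ → (q.f q.top υ).le (g υ)}

theorem succ_le : QLe (q.succ g hκ hg hgf) q := by
  refine ⟨(lt_add_one _).le, ?_, fun α hα υ _ => if_pos hα⟩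
  ext t
  exact ⟨fun ht => ⟨Or.inl ht, q.mem_ht t ht⟩,
    fun ht => mem_T_of_mem_succTree ht.1 (Order.lt_add_one_iff.1 ht.2)⟩

theorem succ_f_top (υ : Ordinal.{u}) : (q.succ g hκ hg hgf).f (q.succ g hκ hg hgf).top υ = g υ :=
  if_neg (lt_add_one _).not_ge

end succ

theorem exists_top_node_above (q : QCond.{u} κ δ) {α υ : Ordinal.{u}} (hα : α ≤ q.top)
    (hυ : υ < δ) : ∃ s ∈ q.T, s.1 = q.top ∧ (q.f α υ).le s ∧
      ((q.f α υ).le (q.f q.top υ) → s = q.f q.top υ) := by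
  by_cases hle : (q.f α υ).le (q.f q.top υ)
  · exact ⟨q.f q.top υ, (q.f_mem _ (lt_add_one _) υ hυ).1, (q.f_mem _ (lt_add_one _) υ hυ).2,
      hle, fun _ => rfl⟩
  · have hfα := q.f_mem α (Order.lt_add_one_iff.2 hα) υ hυ
    obtain ⟨s, hs, hsh, hfs⟩ := q.normal _ hfα.1 q.top (hfα.2.trans_le hα) (lt_add_one _)
    exact ⟨s, hs, hsh, hfs, fun h => absurd h hle⟩

theorem exists_le_forall_f_le_f_top (q : QCond.{u} κ δ) {α : Ordinal.{u}} (hα : α ≤ q.top)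
    (hκ : q.top + 1 + 1 < κ) (hδ : 0 < δ) :
    ∃ p : QCond.{u} κ δ, QLe p q ∧ ∀ υ < δ, (q.f α υ).le (p.f p.top υ) := by
  -- preferring `q.f q.top υ` keeps the new top level of the path eventually above the old one
  have hnode : ∀ υ, ∃ s, υ < δ → s ∈ q.T ∧ s.1 = q.top ∧ (q.f α υ).le s ∧
      ((q.f α υ).le (q.f q.top υ) → s = q.f q.top υ) := fun υ =>
    if hυ : υ < δ then
      let ⟨s, hs⟩ := q.exists_top_node_above hα hυ
      ⟨s, fun _ => hs⟩
    else ⟨q.f α υ, fun h => absurd h hυ⟩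
  choose s hs using hnode
  obtain ⟨ξ, hξ, hf⟩ := q.exists_f_le_f hα le_rfl hδ
  refine ⟨q.succ (fun υ => (s υ).bext false) hκ
      (fun υ hυ => bext_mem_nextLevel (hs υ hυ).1 (hs υ hυ).2.1 false)
      ⟨ξ, hξ, fun υ hξυ hυ => (hs υ hυ).2.2.2 (hf υ hξυ hυ) ▸ le_bext _ _⟩,
    succ_le, fun υ hυ => ?_⟩
  rw [succ_f_top]
  exact le_trans (hs υ hυ).2.2.1 (le_bext _ _)

end QCond

namespace RCond

variable {κ δ : Ordinal.{u}}

/-- `p` read as the condition `⟨p, ⟨f_{top p}, ξ_p⟩ˇ⟩` of `Q_{κ,δ} * Ḟ_{κ,δ}`. -/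
def toItCond (p : RCond.{u} κ δ) : ItCond.{u} κ δ where
  q := p.toQCond
  N α ξ := {r | QLe r p.toQCond ∧ α = p.top ∧ ξ = p.ξ}
  coherent _ _ _ := fun ⟨hr, hα, hξ⟩ => ⟨hr, hα ▸ hr.1, hξ ▸ p.ξ_lt⟩
  down_closed _ _ _ := fun ⟨hr, hα, hξ⟩ _ hr' => ⟨hr'.trans hr, hα, hξ⟩
  value_unique _ _ _ _ _ := fun ⟨_, hα₁, hξ₁⟩ ⟨_, hα₂, hξ₂⟩ =>
    ⟨hα₁.trans hα₂.symm, hξ₁.trans hξ₂.symm⟩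
  densely_decided r hr := ⟨r, QLe.refl r, p.top, p.ξ, hr, rfl, rfl⟩

theorem toItCond_le {c : ItCond.{u} κ δ} {r : QCond.{u} κ δ} {α ξ : Ordinal.{u}}
    (hr : r ∈ c.N α ξ) (p : RCond.{u} κ δ) (hpr : QLe p.toQCond r) (hξ : p.ξ = ξ)
    (hf : ∀ υ, ξ ≤ υ → υ < δ → (r.f α υ).le (p.f p.top υ)) : ItLe p.toItCond c := by
  obtain ⟨hrc, hα, -⟩ := c.coherent α ξ r hr
  refine ⟨hpr.trans hrc, fun s hsp α₁ ξ₁ α₂ ξ₂ ⟨_, hα₁, hξ₁⟩ hs₂ => ?_⟩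
  have hsr : QLe s r := hsp.trans hpr
  obtain ⟨rfl, rfl⟩ := c.value_unique α ξ α₂ ξ₂ s (c.down_closed α ξ r hr s hsr) hs₂
  refine ⟨hξ₁.trans hξ, fun υ hξυ hυ => ?_⟩
  rw [hsr.2.2 α hα υ hυ, hα₁, hsp.2.2 p.top le_rfl υ hυ]
  exact hf υ (hξ ▸ hξ₁ ▸ hξυ) hυ

end RCond

theorem R0_dense_in_iteration_general (κ δ : Cardinal.{u})
    (h2M : Is2Mahlo κ) :
    ∀ c : ItCond.{u} κ.ord δ.ord, ∃ c' : ItCond.{u} κ.ord δ.ord, ItLe c' c ∧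
      ∃ p : RCond.{u} κ.ord δ.ord, c'.q = p.toQCond ∧
        c'.N = fun α ξ => {r : QCond.{u} κ.ord δ.ord |
          QLe r p.toQCond ∧ α = p.top ∧ ξ = p.ξ} := by
  intro c
  obtain ⟨r, -, α, ξ, hr⟩ := c.densely_decided c.q (QLe.refl c.q)
  obtain ⟨-, hα, hξ⟩ := c.coherent α ξ r hr
  have hκ : r.top + 1 + 1 < κ.ord :=
    (Cardinal.isSuccLimit_ord h2M.1.1.aleph0_lt.le).add_one_lt r.top_lt
  obtain ⟨p, hpr, hp⟩ :=
    r.exists_le_forall_f_le_f_top hα hκ (zero_le.trans_lt hξ)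
  let p' : RCond.{u} κ.ord δ.ord := ⟨p, ξ, hξ⟩
  exact ⟨p'.toItCond, p'.toItCond_le hr hpr rfl fun υ _ hυ => hp υ hυ, p', rfl, rfl⟩

/-- The set `R₀` (triples `⟨t, f⃗, g⟩` with `⟨t, f⃗⟩ ∈ Q_{κ,δ}` and `g = ⟨f_{ht(t)-1}, ξ⟩`,
`ξ < δ`) is dense in the two-step iteration `Q_{κ,δ} * Ḟ_{κ,δ}`: below any iteration
condition there is one whose `F`-name is decided to act at the top level of its `Q`-part. -/
theorem R0_dense_in_iteration (κ δ : Cardinal.{u})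
    (h2M : Is2Mahlo κ) (hδ : δ.IsRegular) (hδκ : δ < κ) :
    ∀ c : ItCond.{u} κ.ord δ.ord, ∃ c' : ItCond.{u} κ.ord δ.ord, ItLe c' c ∧
      ∃ p : RCond.{u} κ.ord δ.ord, c'.q = p.toQCond ∧
        c'.N = fun α ξ => {r : QCond.{u} κ.ord δ.ord |
          QLe r p.toQCond ∧ α = p.top ∧ ξ = p.ξ} :=
  R0_dense_in_iteration_general κ δ h2M
end

section
/- If κ is measurable and T is a κ-Suslin tree with a δ-ascent path for some regular δ < κ, then a contradiction follows; hence a measurable cardinal κ carries no δ-ascent κ-Suslin tree for any regular δ < κ. -/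
universe u

/-- An abstract tree: a strict order in which the set of predecessors of any node
is linearly ordered, together with a height (level) function. -/
structure PTree : Type (u + 1) where
  Node : Type u
  lt : Node → Node → Prop
  lt_trans : ∀ {a b c : Node}, lt a b → lt b c → lt a c
  ht : Node → Ordinal.{u}
  lt_ht : ∀ {a b : Node}, lt a b → ht a < ht b
  below_linear : ∀ {a b c : Node}, lt a c → lt b c → lt a b ∨ a = b ∨ lt b a

/-- `T` has height `κ`: all nodes live on levels `< κ` and every level `< κ` is nonempty. -/
def PTree.HeightIs (T : PTree.{u}) (κ : Ordinal.{u}) : Prop :=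
  (∀ x : T.Node, T.ht x < κ) ∧ ∀ α < κ, ∃ x : T.Node, T.ht x = α

def PTree.IsAntichainIn (T : PTree.{u}) (A : Set T.Node) : Prop :=
  ∀ a ∈ A, ∀ b ∈ A, a ≠ b → ¬ T.lt a b ∧ ¬ T.lt b a

def PTree.IsChainIn (T : PTree.{u}) (C : Set T.Node) : Prop :=
  ∀ a ∈ C, ∀ b ∈ C, a = b ∨ T.lt a b ∨ T.lt b a

/-- `T` is a `κ`-Suslin tree: it has height `κ` and every antichain and every chain
has size `< κ`. -/
def PTree.IsSuslin (T : PTree.{u}) (κ : Cardinal.{u}) : Prop :=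
  T.HeightIs κ.ord ∧ (∀ A : Set T.Node, T.IsAntichainIn A → Cardinal.mk A < κ) ∧
    ∀ C : Set T.Node, T.IsChainIn C → Cardinal.mk C < κ

/-- `f` is a `δ`-ascent path through the tree `T` of height `κ`:
`f α : δ → Lev_α(T)` and for `α < β < κ` the set of `υ < δ` with
`f α υ <_T f β υ` is co-bounded in `δ`. -/
def PTree.AscentPath (T : PTree.{u}) (κ δ : Ordinal.{u})
    (f : Ordinal.{u} → Ordinal.{u} → T.Node) : Prop :=
  (∀ α < κ, ∀ υ < δ, T.ht (f α υ) = α) ∧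
    ∀ α β : Ordinal.{u}, α < β → β < κ →
      ∃ θ < δ, ∀ υ : Ordinal.{u}, θ ≤ υ → υ < δ → T.lt (f α υ) (f β υ)

/-- `U` is `δ`-complete: it is closed under intersections of fewer than `δ` many sets. -/
def UFComplete {α : Type u} (δ : Cardinal.{u}) (U : Ultrafilter α) : Prop :=
  ∀ s : Set (Set α), Cardinal.mk s < δ → (∀ t ∈ s, t ∈ U) → ⋂₀ s ∈ U

/-- `U` is uniform: every member of `U` has full cardinality. -/
def UFUniform {α : Type u} (U : Ultrafilter α) : Prop :=
  ∀ A ∈ U, Cardinal.mk A = Cardinal.mk α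

/-! Let `U` be a uniform ultrafilter on `κ`, closed under intersections of `δ` many sets
(a `κ`-complete nonprincipal one is such). For each `α < κ` the ascent path gives, for every
`β > α`, a bound `θ < δ` past which `f α υ <_T f β υ`; since final segments of `κ` lie in `U`,
completeness fixes one bound `θ_α` working for `U`-almost all `β`, and then one value
`θ = θ_α` for all `α` in some `S ∈ U`. Any two nodes `f α θ`, `f α' θ` with `α, α' ∈ S` lie
below a common node `f β θ`, so `{f α θ | α ∈ S}` is a chain of size `κ`. -/

open Cardinal Set
open scoped Ordinal

section Ultrafilter

variable {α : Type u} {U : Ultrafilter α}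

theorem Ultrafilter.infinite_of_forall_compl_singleton_mem (hnp : ∀ x : α, ({x} : Set α)ᶜ ∈ U) :
    Infinite α := by
  by_contra hfin
  have : Finite α := not_infinite_iff_finite.mp hfin
  obtain ⟨a, rfl⟩ := U.eq_pure_of_finite
  simpa using hnp a

theorem UFComplete.exists_lt_mem_of_biUnion_mem {μ : Cardinal.{u}} (hcomp : UFComplete μ U)
    {o : Ordinal.{u}} (ho : o.card < μ) {s : Ordinal.{u} → Set α} (hU : (⋃ θ < o, s θ) ∈ U) :
    ∃ θ < o, s θ ∈ U := by
  by_contra! hnot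
  have hsmall : #((fun θ => (s θ)ᶜ) '' Iio o) < μ := by
    rw [← lift_lt.{u, u + 1}]
    refine mk_image_le_lift.trans_lt ?_
    simpa only [mk_Iio_ordinal, lift_lift, lift_lt] using ho
  have hcompl := hcomp _ hsmall (by
    rintro _ ⟨θ, hθ, rfl⟩
    exact U.compl_mem_iff_notMem.mpr (hnot θ hθ))
  rw [sInter_image, ← compl_iUnion₂] at hcompl
  exact U.compl_mem_iff_notMem.mp hcompl hU

theorem UFComplete.ufUniform (hcomp : UFComplete #α U) (hnp : ∀ x : α, ({x} : Set α)ᶜ ∈ U) :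
    UFUniform U := by
  intro A hA
  refine (mk_set_le A).eq_of_not_lt fun hlt => ?_
  have hsmall : #((fun x => ({x} : Set α)ᶜ) '' A) < #α := mk_image_le.trans_lt hlt
  have hcompl := hcomp _ hsmall (by rintro _ ⟨x, -, rfl⟩; exact hnp x)
  rw [sInter_image, ← compl_iUnion₂, biUnion_of_singleton] at hcompl
  exact U.compl_mem_iff_notMem.mp hcompl hA

theorem UFUniform.Ioi_mem [LinearOrder α] [WellFoundedLT α] [Infinite α] (hU : UFUniform U)
    (hα : (#α).ord = typeLT α) (b : α) : Ioi b ∈ U := by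
  have hIio : Iio b ∉ U := fun h => (mk_Iio_lt b hα).ne (hU _ h)
  have hb : ({b} : Set α) ∉ U := fun h => by
    have := hU _ h
    rw [mk_singleton] at this
    exact (one_lt_aleph0.trans_le (aleph0_le_mk α)).ne this
  rw [← compl_Iic, ← Iio_insert, U.compl_mem_iff_notMem, insert_eq, Ultrafilter.union_mem_iff]
  exact not_or.2 ⟨hb, hIio⟩

end Ultrafilter

theorem PTree.isChainIn_of_forall_exists_lt (T : PTree.{u}) {C : Set T.Node}
    (h : ∀ a ∈ C, ∀ b ∈ C, ∃ c, T.lt a c ∧ T.lt b c) : T.IsChainIn C := by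
  intro a ha b hb
  obtain ⟨c, hac, hbc⟩ := h a ha b hb
  rcases T.below_linear hac hbc with hab | rfl | hba
  exacts [Or.inr (Or.inl hab), Or.inl rfl, Or.inr (Or.inr hba)]

theorem PTree.exists_level_mem_pairwise_bounded {X : Type u} [Preorder X] {U : Ultrafilter X}
    {μ : Cardinal.{u}} (hcomp : UFComplete μ U) (T : PTree.{u}) {δ : Ordinal.{u}}
    (hδ : δ.card < μ) (hIoi : ∀ a, Ioi a ∈ U) {F : X → Ordinal.{u} → T.Node}
    (hF : ∀ a c, a < c → ∃ θ < δ, ∀ υ, θ ≤ υ → υ < δ → T.lt (F a υ) (F c υ)) :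
    ∃ θ < δ, ∃ S ∈ U, ∀ a ∈ S, ∀ b ∈ S, ∃ c, T.lt (F a θ) (F c θ) ∧ T.lt (F b θ) (F c θ) := by
  have hbound : ∀ a, ∃ θ < δ, {c | ∀ υ, θ ≤ υ → υ < δ → T.lt (F a υ) (F c υ)} ∈ U := by
    intro a
    refine hcomp.exists_lt_mem_of_biUnion_mem hδ (Filter.mem_of_superset (hIoi a) fun c hac => ?_)
    obtain ⟨θ, hθ, hlt⟩ := hF a c hac
    exact mem_biUnion hθ hlt
  choose t ht htU using hbound
  obtain ⟨θ, hθ, hS⟩ : ∃ θ < δ, {a | t a = θ} ∈ U := by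
    refine hcomp.exists_lt_mem_of_biUnion_mem hδ (Filter.mem_of_superset Filter.univ_mem ?_)
    intro a _
    exact mem_biUnion (ht a) rfl
  refine ⟨θ, hθ, _, hS, fun a ha b hb => ?_⟩
  obtain ⟨c, hac, hbc⟩ := Ultrafilter.nonempty_of_mem (Filter.inter_mem (htU a) (htU b))
  exact ⟨c, hac θ (le_of_eq ha) hθ, hbc θ (le_of_eq hb) hθ⟩

theorem PTree.AscentPath.exists_chain_mk_eq {X : Type u} [Infinite X] {U : Ultrafilter X}
    {μ : Cardinal.{u}} (hU : UFUniform U) (hcomp : UFComplete μ U) {T : PTree.{u}}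
    {δ : Ordinal.{u}} (hδ : δ.card < μ) {f : Ordinal.{u} → Ordinal.{u} → T.Node}
    (hf : T.AscentPath (#X).ord δ f) :
    ∃ C : Set T.Node, T.IsChainIn C ∧ #C = #X := by
  obtain ⟨_, _, hX⟩ := Cardinal.exists_ord_eq_type_lt X
  let i : X → Ordinal.{u} := Ordinal.typein (· < ·)
  have hi : ∀ a, i a < (#X).ord := fun a => hX ▸ Ordinal.typein_lt_type _ a
  obtain ⟨θ, hθ, S, hS, hcoh⟩ := T.exists_level_mem_pairwise_bounded hcomp hδ (hU.Ioi_mem hX)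
    (F := fun a => f (i a)) fun a c hac =>
      hf.2 _ _ ((Ordinal.typein_lt_typein _).2 hac) (hi c)
  have hinj : InjOn (fun a => f (i a) θ) S := fun a _ b _ hab => by
    have hht : i a = i b := by
      rw [← hf.1 _ (hi a) θ hθ, ← hf.1 _ (hi b) θ hθ]
      exact congrArg T.ht hab
    exact Ordinal.typein_injective _ hht
  refine ⟨(fun a => f (i a) θ) '' S, T.isChainIn_of_forall_exists_lt ?_, ?_⟩
  · rintro _ ⟨a, ha, rfl⟩ _ ⟨b, hb, rfl⟩
    obtain ⟨c, hac, hbc⟩ := hcoh a ha b hb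
    exact ⟨f (i c) θ, hac, hbc⟩
  · rw [mk_image_eq_of_injOn _ _ hinj]
    exact hU S hS

theorem no_ascent_suslin_at_measurable_general (κ δ : Cardinal.{u})
    (hδκ : δ < κ)
    (hmeas : ∃ (α : Type u) (_ : Cardinal.mk α = κ) (U : Ultrafilter α),
      UFComplete κ U ∧ ∀ x : α, ({x} : Set α)ᶜ ∈ U)
    (htree : ∃ (T : PTree.{u}) (f : Ordinal.{u} → Ordinal.{u} → T.Node),
      T.IsSuslin κ ∧ T.AscentPath κ.ord δ.ord f) :
    False := by
  obtain ⟨X, rfl, U, hcomp, hnp⟩ := hmeas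
  obtain ⟨T, f, ⟨-, -, hchain⟩, hf⟩ := htree
  have : Infinite X := U.infinite_of_forall_compl_singleton_mem hnp
  obtain ⟨C, hC, hCX⟩ := hf.exists_chain_mk_eq (hcomp.ufUniform hnp) hcomp (by rwa [card_ord])
  exact (hchain C hC).ne hCX

/-- A measurable cardinal `κ` carries no `δ`-ascent `κ`-Suslin tree for any regular
`δ < κ`: if `κ` is measurable and `T` is a `κ`-Suslin tree with a `δ`-ascent path,
a contradiction follows. -/
theorem no_ascent_suslin_at_measurable (κ δ : Cardinal.{u})
    (hδ : δ.IsRegular) (hδκ : δ < κ)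
    (hmeas : ∃ (α : Type u) (_ : Cardinal.mk α = κ) (U : Ultrafilter α),
      UFComplete κ U ∧ ∀ x : α, ({x} : Set α)ᶜ ∈ U)
    (htree : ∃ (T : PTree.{u}) (f : Ordinal.{u} → Ordinal.{u} → T.Node),
      T.IsSuslin κ ∧ T.AscentPath κ.ord δ.ord f) :
    False :=
  no_ascent_suslin_at_measurable_general κ δ hδκ hmeas htree
end
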